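/- Let D be a strong digraph of order n = 2m+1 ≥ 5 that contains no cycle passing through all of its T-vertices, let C = x_1x_2…x_{n−1}x_1 be a cycle of length n−1 in D, let x be the unique vertex of D not on C, and suppose x and x_{n−1} are not adjacent; write y = x_{n−1} and p = n−2. If for some k ∈ [2, p−1] the vertex x_k is adjacent to neither x nor y, then the arcs x_p x_k and x_k x_1 are present in D, and moreover N⁺(x) = N⁺(y) and N⁻(x) = N⁻(y). -/

import Mathlib

/-!
Basic framework: finite loopless digraphs (arcs may exist in both directions),
degrees, adjacency, directed cycles (as injective maps from `ZMod k` respecting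
arcs), strong and 2-strong connectivity, T-vertices, and the special digraphs
`D₅`, `D₇`, the classes `L₁`, `L₂`, etc. from the paper
"On Cycles through Vertices of Large Semidegree in Digraphs".
-/

/-- A digraph: a loopless arc relation (arcs `u → v`; both `uv` and `vu` allowed). -/
structure Dgr (V : Type*) where
  Arc : V → V → Prop
  loopless : ∀ v, ¬ Arc v v

namespace Dgr

variable {V : Type*}

/-- Two vertices are adjacent if there is an arc between them in some direction. -/
def Adj (D : Dgr V) (u v : V) : Prop := D.Arc u v ∨ D.Arc v u

/-- Out-degree `d⁺(u)`. -/
noncomputable def outDeg (D : Dgr V) (u : V) : ℕ := {v | D.Arc u v}.ncard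

/-- In-degree `d⁻(u)`. -/
noncomputable def inDeg (D : Dgr V) (u : V) : ℕ := {v | D.Arc v u}.ncard

/-- Degree `d(u) = d⁺(u) + d⁻(u)`. -/
noncomputable def deg (D : Dgr V) (u : V) : ℕ := D.outDeg u + D.inDeg u

/-- `d⁺(u, A)`: number of out-neighbours of `u` in `A`. -/
noncomputable def outDegOn (D : Dgr V) (u : V) (A : Set V) : ℕ := {v ∈ A | D.Arc u v}.ncard

/-- `d⁻(u, A)`: number of in-neighbours of `u` in `A`. -/
noncomputable def inDegOn (D : Dgr V) (u : V) (A : Set V) : ℕ := {v ∈ A | D.Arc v u}.ncard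

/-- `d(u, A) = d⁺(u, A) + d⁻(u, A)`. -/
noncomputable def degOn (D : Dgr V) (u : V) (A : Set V) : ℕ := D.outDegOn u A + D.inDegOn u A

/-- In a digraph of order `2m+1`, a `T`-vertex is one with `d⁺(u) ≥ m` and `d⁻(u) ≥ m`. -/
def TVertex (D : Dgr V) (m : ℕ) (u : V) : Prop := m ≤ D.outDeg u ∧ m ≤ D.inDeg u

/-- A directed cycle of length `k ≥ 2`, given as an injective map `c : ZMod k → V`
with an arc from each `c i` to `c (i+1)`. -/
def IsCycle (D : Dgr V) {k : ℕ} (c : ZMod k → V) : Prop :=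
  2 ≤ k ∧ Function.Injective c ∧ ∀ i, D.Arc (c i) (c (i + 1))

/-- `D` has a (directed) cycle through all vertices of `S`. -/
def CycleThrough (D : Dgr V) (S : Set V) : Prop :=
  ∃ (k : ℕ) (c : ZMod k → V), D.IsCycle c ∧ S ⊆ Set.range c

/-- A Hamiltonian cycle: a cycle through all the vertices. -/
def Hamiltonian (D : Dgr V) [Fintype V] : Prop :=
  ∃ c : ZMod (Fintype.card V) → V, D.IsCycle c ∧ Function.Surjective c

/-- `D` is strong: a directed path (walk) from `u` to `v` for every pair of
distinct vertices. -/
def Strong (D : Dgr V) : Prop :=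
  ∀ u v : V, u ≠ v → Relation.TransGen D.Arc u v

/-- The induced subdigraph on a set `S` of vertices. -/
def restrict (D : Dgr V) (S : Set V) : Dgr S where
  Arc a b := D.Arc a b
  loopless v := D.loopless v

/-- `D` is 2-strong: at least 3 vertices, and deleting any single vertex leaves
a strong digraph. -/
def TwoStrong (D : Dgr V) [Fintype V] : Prop :=
  3 ≤ Fintype.card V ∧ ∀ w : V, (D.restrict {v | v ≠ w}).Strong

/-- Isomorphism of digraphs. -/
def Iso (D : Dgr V) {W : Type*} (E : Dgr W) : Prop :=
  ∃ e : V ≃ W, ∀ a b : V, D.Arc a b ↔ E.Arc (e a) (e b)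

end Dgr

/-- A digraph defined by a list of arcs. -/
def ofList {V : Type*} [DecidableEq V] (l : List (V × V)) (h : ∀ v : V, (v, v) ∉ l) :
    Dgr V where
  Arc a b := (a, b) ∈ l
  loopless v hv := h v hv

/-- Arcs of the digraph `D₅` (vertices `x₁,x₂,x₃ = 0,1,2`, `x = 3`, `y = 4`):
`N⁺(x₁)={x₂,y}`, `N⁺(x₂)={x₃,x}`, `N⁺(x₃)={x,y}`, `N⁺(x)={x₁,x₂}`, `N⁺(y)={x₁,x₃}`. -/
def D5arcs : List (Fin 5 × Fin 5) :=
  [(0,1),(0,4),(1,2),(1,3),(2,3),(2,4),(3,0),(3,1),(4,0),(4,2)]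

/-- The digraph `D₅`. -/
def D5 : Dgr (Fin 5) := ofList D5arcs (by decide)

/-- `L₁`: the three digraphs obtained from `D₅` by adding the arc `x₁x₃`, the arc
`x₃x₁`, or both. -/
def L1 : Set (Dgr (Fin 5)) :=
  {ofList ((0,2) :: D5arcs) (by decide),
   ofList ((2,0) :: D5arcs) (by decide),
   ofList ((0,2) :: (2,0) :: D5arcs) (by decide)}

/-- Arcs of the digraph `D₇` (vertices `x₁,…,x₅ = 0,…,4`, `x = 5`, `y = 6`):
`N⁺(x₁)={x₂,x₅,y}`, `N⁺(x₂)={x₃,x₄,y}`, `N⁺(x₃)={x₂,x₄,x}`, `N⁺(x₄)={x₃,x₅,x}`,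
`N⁺(x₅)={x₁,x,y}`, `N⁺(x)={x₁,x₂,x₃}`, `N⁺(y)={x₁,x₄,x₅}`. -/
def D7arcs : List (Fin 7 × Fin 7) :=
  [(0,1),(0,4),(0,6),(1,2),(1,3),(1,6),(2,1),(2,3),(2,5),(3,2),(3,4),(3,5),
   (4,0),(4,5),(4,6),(5,0),(5,1),(5,2),(6,0),(6,3),(6,4)]

/-- The digraph `D₇`. -/
def D7 : Dgr (Fin 7) := ofList D7arcs (by decide)

/-- Membership in the class `L₂`: there is an enumeration `x_1,…,x_{2m}, x` of the
vertices (here `b i = x_i`, indices mod `2m`, so `b 0 = x_{2m}`) such that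
`x_1x_2⋯x_{2m}x_1` is a cycle, `x` and `x_{2m}` are nonadjacent,
`N⁺(x) = N⁺(x_{2m}) = {x_1,…,x_m}`, `N⁻(x) = N⁻(x_{2m}) = {x_m,…,x_{2m-1}}`,
and there is no arc from `{x_1,…,x_{m-1}}` to `{x_{m+1},…,x_{2m-1}}`. -/
def InL2 {V : Type*} (D : Dgr V) (m : ℕ) : Prop :=
  ∃ (b : ZMod (2 * m) → V) (x : V),
    1 ≤ m ∧
    Function.Injective b ∧ x ∉ Set.range b ∧
    (∀ i, D.Arc (b i) (b (i + 1))) ∧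
    ¬ D.Adj x (b 0) ∧
    {v | D.Arc x v} = (fun i : ℕ => b i) '' Set.Icc 1 m ∧
    {v | D.Arc (b 0) v} = (fun i : ℕ => b i) '' Set.Icc 1 m ∧
    {v | D.Arc v x} = (fun i : ℕ => b i) '' Set.Icc m (2 * m - 1) ∧
    {v | D.Arc v (b 0)} = (fun i : ℕ => b i) '' Set.Icc m (2 * m - 1) ∧
    (∀ i ∈ Set.Icc 1 (m - 1), ∀ j ∈ Set.Icc (m + 1) (2 * m - 1),
      ¬ D.Arc (b (i : ℕ)) (b (j : ℕ)))

/-- `K*_{m,m+1} ⊆ D ⊆ [K_m + K̄_{m+1}]*` (containments as spanning subdigraphs):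
the vertex set splits into `A` of size `m` and its complement of size `m+1`, all arcs
between `A` and `Aᶜ` are present in both directions, and there are no arcs inside `Aᶜ`. -/
def KSandwich {V : Type*} (D : Dgr V) (m : ℕ) : Prop :=
  ∃ A : Set V, A.ncard = m ∧ Aᶜ.ncard = m + 1 ∧
    (∀ a ∈ A, ∀ b ∈ Aᶜ, D.Arc a b ∧ D.Arc b a) ∧
    (∀ u ∈ Aᶜ, ∀ v ∈ Aᶜ, ¬ D.Arc u v)

/-- Alternative (iv) of Theorem 2: `D` has a cycle `C = z_1 z_2 ⋯ z_{2m} z_1` of length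
`2m` such that, with `z` the vertex off the cycle, at least `3` vertices of the cycle
are nonadjacent to `z`, and every cycle vertex `z_l` nonadjacent to `z` satisfies
`z_{l-1}z, z z_{l+1} ∈ A(D)`, `N⁺(z) = N⁺(z_l)` and `N⁻(z) = N⁻(z_l)`; in particular
these vertices together with `z` form an independent set. -/
def PropIV {V : Type*} (D : Dgr V) (m : ℕ) : Prop :=
  ∃ (c : ZMod (2 * m) → V) (z : V),
    D.IsCycle c ∧ z ∉ Set.range c ∧
    3 ≤ {i : ZMod (2 * m) | ¬ D.Adj z (c i)}.ncard ∧
    (∀ i : ZMod (2 * m), ¬ D.Adj z (c i) →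
      D.Arc (c (i - 1)) z ∧ D.Arc z (c (i + 1)) ∧
      {v | D.Arc z v} = {v | D.Arc (c i) v} ∧
      {v | D.Arc v z} = {v | D.Arc v (c i)}) ∧
    (insert z (c '' {i | ¬ D.Adj z (c i)})).Pairwise (fun a b => ¬ D.Adj a b)

/-!
The vertex `x` is left out by the cycle `C`, so it is a `T`-vertex and cannot be inserted into
`C`: either would give a cycle through all `T`-vertices. Since `d⁺(x) + d⁻(x) ≥ 2m = |C|`, a
count then shows that for every `i` exactly one of `x_i x`, `x x_{i+1}` is an arc. As `x` is
adjacent to neither `y` nor `x_k`, it can take the place of either on `C`; this leaves `y`, resp.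
`x_k`, off a cycle through all other vertices, so they obey the same dichotomy. Read at the
non-neighbour `y`, the dichotomy for `x_k` gives the arcs `x_p x_k` and `x_k x_1`. With these, an
arc `x_i x` without `x_i y` (or vice versa) lets one move `x_k` across `x_i` and close a
Hamiltonian cycle, so `N⁻(x) = N⁻(y)`, and the dichotomies turn this into `N⁺(x) = N⁺(y)`.
-/

theorem List.isChain_cons_map_range'_append {α : Type*} {R : α → α → Prop} {g : ℕ → α}
    (hg : ∀ t, R (g t) (g (t + 1))) {a : α} {s e : ℕ} (hse : s ≤ e) {l : List α}
    (ha : R a (g s)) (hl : (g e :: l).IsChain R) :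
    (a :: ((List.range' s (e + 1 - s)).map g ++ l)).IsChain R := by
  induction h : e - s generalizing a s with
  | zero =>
    obtain rfl : s = e := by omega
    simpa [Nat.add_sub_cancel_left] using hl.cons_cons ha
  | succ d ih =>
    rw [show e + 1 - s = (e + 1 - (s + 1)) + 1 by omega, List.range'_succ]
    exact (ih (a := g s) (s := s + 1) (by omega) (hg s) (by omega)).cons_cons ha

namespace Dgr

variable {V : Type*} {D : Dgr V} {n : ℕ} {c : ZMod n → V} {w : V}

theorem Hamiltonian.cycleThrough [Fintype V] (hD : D.Hamiltonian) (S : Set V) :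
    D.CycleThrough S := by
  obtain ⟨c, hc, hsurj⟩ := hD
  exact ⟨_, c, hc, fun v _ => hsurj v⟩

theorem hamiltonian_of_isChain [Fintype V] {a : V} {l : List V}
    (hlen : l.length + 1 = Fintype.card V) (hcover : ∀ v, v ∈ a :: l)
    (hchain : (a :: l ++ [a]).IsChain D.Arc) : D.Hamiltonian := by
  set N := Fintype.card V
  have : NeZero N := ⟨by omega⟩
  have hL : (a :: l).length = N := hlen
  have hN : 2 ≤ N := by
    rcases l with _ | ⟨b, l⟩
    · exact absurd (List.isChain_cons_cons.mp hchain).1 (D.loopless a)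
    · simp only [List.length_cons] at hlen; omega
  set c : ZMod N → V := fun z => (a :: l)[z.val]'((ZMod.val_lt z).trans_eq hL.symm)
  have hsurj : Function.Surjective c := by
    intro v
    obtain ⟨i, hi, rfl⟩ := List.mem_iff_getElem.mp (hcover v)
    refine ⟨i, ?_⟩
    simp only [c, ZMod.val_natCast, Nat.mod_eq_of_lt (hi.trans_eq hL)]
  refine ⟨c, ⟨hN, ((Fintype.bijective_iff_surjective_and_card c).2 ⟨hsurj, ZMod.card N⟩).1, ?_⟩,
    hsurj⟩
  intro z
  have hz : z.val < (a :: l).length := (ZMod.val_lt z).trans_eq hL.symm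
  have hstep := List.isChain_iff_getElem.mp hchain z.val
    (by rw [List.length_append, List.length_singleton]; omega)
  rw [List.getElem_append_left hz] at hstep
  by_cases hlast : z.val + 1 = N
  · have : (z + 1).val = 0 := by
      rw [ZMod.val_add, ZMod.val_one_eq_one_mod, Nat.mod_eq_of_lt (by omega : 1 < N), hlast,
        Nat.mod_self]
    rw [List.getElem_concat_length (hlast.trans hL.symm)] at hstep
    simpa only [c, this, List.getElem_cons_zero] using hstep
  · have : (z + 1).val = z.val + 1 := by
      rw [ZMod.val_add, ZMod.val_one_eq_one_mod, Nat.mod_eq_of_lt (by omega : 1 < N),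
        Nat.mod_eq_of_lt (by omega)]
    rw [List.getElem_append_left (by omega)] at hstep
    simpa only [c, this] using hstep

theorem IsCycle.mem_range_of_ne [Fintype V] (hc : D.IsCycle c) (hcard : Fintype.card V = n + 1)
    (hw : w ∉ Set.range c) {v : V} (hv : v ≠ w) : v ∈ Set.range c := by
  classical
  have : NeZero n := ⟨by have := hc.1; omega⟩
  have huniv : insert w (Finset.univ.image c) = Finset.univ := by
    apply Finset.eq_univ_of_card
    rw [Finset.card_insert_of_notMem (by simpa using hw),
      Finset.card_image_of_injective _ hc.2.1, Finset.card_univ, ZMod.card, hcard]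
  have hvu : v ∈ insert w (Finset.univ.image c) := huniv ▸ Finset.mem_univ v
  simpa [hv] using hvu

theorem IsCycle.hamiltonian_of_insert [Fintype V] (hc : D.IsCycle c)
    (hcard : Fintype.card V = n + 1) (hw : w ∉ Set.range c) {i : ZMod n}
    (hin : D.Arc (c i) w) (hout : D.Arc w (c (i + 1))) : D.Hamiltonian := by
  have : NeZero n := ⟨by have := hc.1; omega⟩
  set g : ℕ → V := fun t => c (i + 1 + t)
  have hg : ∀ t, D.Arc (g t) (g (t + 1)) := fun t => by
    simpa only [g, Nat.cast_succ, add_assoc] using hc.2.2 (i + 1 + t)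
  have hlast : g (n - 1) = c i := by
    simp only [g, Nat.cast_pred (NeZero.pos n), ZMod.natCast_self]
    ring_nf
  refine hamiltonian_of_isChain (a := w) (l := (List.range' 0 (n - 1 + 1 - 0)).map g)
    (by simp only [List.length_map, List.length_range', hcard]; have := NeZero.pos n; omega) ?_ ?_
  · intro v
    by_cases hv : v = w
    · exact hv ▸ List.mem_cons_self
    obtain ⟨z, rfl⟩ := hc.mem_range_of_ne hcard hw hv
    refine List.mem_cons_of_mem _ (List.mem_map.2 ⟨(z - (i + 1)).val, ?_, ?_⟩)
    · simpa [List.mem_range'_1] using Nat.le_sub_one_of_lt (ZMod.val_lt (z - (i + 1)))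
    · simp [g]
  · rw [List.cons_append]
    refine List.isChain_cons_map_range'_append hg (Nat.zero_le _) (by simpa [g] using hout) ?_
    exact List.IsChain.cons_cons (hlast ▸ hin) (List.isChain_singleton w)

theorem tVertex_of_notMem_range [Fintype V] {m : ℕ}
    (hnocyc : ¬ D.CycleThrough {u | D.TVertex m u}) (hc : D.IsCycle c)
    (hcard : Fintype.card V = n + 1) (hw : w ∉ Set.range c) : D.TVertex m w := by
  by_contra hT
  exact hnocyc ⟨n, c, hc, fun v hv => hc.mem_range_of_ne hcard hw fun h => hT (h ▸ hv)⟩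

theorem ncard_setOf_eq_card_filter [NeZero n] (hc : Function.Injective c) {P : V → Prop}
    [DecidablePred P] (hP : ∀ v, P v → v ∈ Set.range c) :
    {v | P v}.ncard = (Finset.univ.filter fun z => P (c z)).card := by
  classical
  have : {v | P v} = ↑((Finset.univ.filter fun z => P (c z)).image c) := by
    ext v
    constructor
    · intro hv
      obtain ⟨z, rfl⟩ := hP v hv
      simpa using ⟨z, hv, rfl⟩
    · simp only [Finset.coe_image, Finset.coe_filter, Set.mem_image]
      rintro ⟨z, hz, rfl⟩
      simpa using hz
  rw [this, Set.ncard_coe_finset, Finset.card_image_of_injective _ hc]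

/-- The out-neighbours of `w` and the successors of its in-neighbours are disjoint sets of
cycle positions with at least `n` elements in total, so together they fill the cycle. -/
theorem arc_succ_iff_not_arc [NeZero n] (hc : Function.Injective c)
    (hnbr : ∀ v, D.Adj w v → v ∈ Set.range c) (hdeg : n ≤ D.deg w)
    (hins : ∀ z, ¬ (D.Arc (c z) w ∧ D.Arc w (c (z + 1)))) (z : ZMod n) :
    D.Arc w (c (z + 1)) ↔ ¬ D.Arc (c z) w := by
  classical
  refine ⟨fun hout hin => hins z ⟨hin, hout⟩, fun hin => ?_⟩
  set Sout := Finset.univ.filter fun z => D.Arc w (c z)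
  set Sin := Finset.univ.filter fun z => D.Arc (c z) w
  have hout : D.outDeg w = Sout.card :=
    ncard_setOf_eq_card_filter hc fun v hv => hnbr v (Or.inl hv)
  have hin' : D.inDeg w = Sin.card :=
    ncard_setOf_eq_card_filter hc fun v hv => hnbr v (Or.inr hv)
  have hdisj : Disjoint Sout (Sin.image (· + 1)) := by
    simp only [Finset.disjoint_left, Finset.mem_image, not_exists, not_and]
    intro z hz z' hz' hzz'
    subst hzz'
    exact hins z' ⟨(Finset.mem_filter.1 hz').2, (Finset.mem_filter.1 hz).2⟩
  have huniv : Sout ∪ Sin.image (· + 1) = Finset.univ := by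
    apply Finset.eq_univ_of_card
    have := Finset.card_le_univ (Sout ∪ Sin.image (· + 1))
    rw [Finset.card_union_of_disjoint hdisj,
      Finset.card_image_of_injective _ (add_left_injective 1)] at this ⊢
    rw [ZMod.card] at this ⊢
    unfold deg at hdeg
    omega
  have hz : z + 1 ∈ Sout ∪ Sin.image (· + 1) := huniv ▸ Finset.mem_univ _
  rcases Finset.mem_union.1 hz with h | h
  · exact (Finset.mem_filter.1 h).2
  · obtain ⟨z', hz', hzz'⟩ := Finset.mem_image.1 h
    obtain rfl : z' = z := add_right_cancel hzz'
    exact absurd (Finset.mem_filter.1 hz').2 hin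

/-- `w` is a `T`-vertex, since `c` passes through all other vertices, and it cannot be inserted
into `c`, since that would give a Hamiltonian cycle. -/
theorem arc_succ_iff_not_arc_of_notMem_range [Fintype V] {m : ℕ}
    (hnocyc : ¬ D.CycleThrough {u | D.TVertex m u}) (hc : D.IsCycle c)
    (hcard : Fintype.card V = n + 1) (hn : n ≤ 2 * m) (hw : w ∉ Set.range c) (z : ZMod n) :
    D.Arc w (c (z + 1)) ↔ ¬ D.Arc (c z) w := by
  have : NeZero n := ⟨by have := hc.1; omega⟩
  have hT := tVertex_of_notMem_range hnocyc hc hcard hw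
  refine arc_succ_iff_not_arc hc.2.1 (fun v hv => hc.mem_range_of_ne hcard hw ?_) ?_ ?_ z
  · rintro rfl
    exact hv.elim (D.loopless v) (D.loopless v)
  · unfold deg
    have := hT.1
    have := hT.2
    omega
  · exact fun i ⟨hin, hout⟩ => hnocyc ((hc.hamiltonian_of_insert hcard hw hin hout).cycleThrough _)

def CanReplace (D : Dgr V) (c : ZMod n → V) (i : ZMod n) (w : V) : Prop :=
  D.Arc (c (i - 1)) w ∧ D.Arc w (c (i + 1))

theorem IsCycle.canReplace_self (hc : D.IsCycle c) (i : ZMod n) : D.CanReplace c i (c i) :=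
  ⟨by simpa using hc.2.2 (i - 1), hc.2.2 i⟩

theorem canReplace_of_arc_succ_iff (hw : ∀ z, D.Arc w (c (z + 1)) ↔ ¬ D.Arc (c z) w) {i : ZMod n}
    (hi : ¬ D.Adj w (c i)) : D.CanReplace c i w :=
  ⟨not_not.1 fun h => hi (.inl (by simpa using (hw (i - 1)).2 h)), (hw i).2 fun h => hi (.inr h)⟩

theorem IsCycle.update (hc : D.IsCycle c) (hw : w ∉ Set.range c)
    {i : ZMod n} (hwi : D.CanReplace c i w) : D.IsCycle (Function.update c i w) := by
  obtain ⟨hin, hout⟩ := hwi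
  obtain ⟨hn, hinj, harc⟩ := hc
  have : Fact (1 < n) := ⟨hn⟩
  refine ⟨hn, fun a a' h => ?_, fun z => ?_⟩
  · by_cases ha : a = i <;> by_cases ha' : a' = i
    · rw [ha, ha']
    · simp only [ha, ha', Function.update_self, ne_eq, not_false_eq_true,
        Function.update_of_ne] at h
      exact absurd ⟨a', h.symm⟩ hw
    · simp only [ha, ha', Function.update_self, ne_eq, not_false_eq_true,
        Function.update_of_ne] at h
      exact absurd ⟨a, h⟩ hw
    · simp only [ne_eq, ha, not_false_eq_true, Function.update_of_ne, ha'] at h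
      exact hinj h
  · by_cases hz : z = i
    · subst hz
      simpa [Function.update_of_ne (show z + 1 ≠ z by simp)] using hout
    by_cases hz' : z + 1 = i
    · obtain rfl : z = i - 1 := eq_sub_of_add_eq hz'
      simpa [hz, hz'] using hin
    · simpa [Function.update_of_ne hz, Function.update_of_ne hz'] using harc z

/-- Replacing `c i` by `w` leaves `c i` as the only vertex off a cycle. -/
theorem arc_succ_iff_not_arc_of_replace [Fintype V] {m : ℕ}
    (hnocyc : ¬ D.CycleThrough {u | D.TVertex m u}) (hc : D.IsCycle c)
    (hcard : Fintype.card V = n + 1) (hn : n ≤ 2 * m) (hw : w ∉ Set.range c) {i : ZMod n}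
    (hwi : D.CanReplace c i w) (z : ZMod n) :
    D.Arc (c i) (c (z + 1)) ↔ ¬ D.Arc (c z) (c i) := by
  by_cases hz : z = i
  · subst hz
    exact iff_of_true (hc.2.2 z) (D.loopless _)
  by_cases hz' : z + 1 = i
  · subst hz'
    exact iff_of_false (D.loopless _) (not_not.2 (hc.2.2 z))
  have hci : c i ∉ Set.range (Function.update c i w) := by
    rintro ⟨a, ha⟩
    by_cases hai : a = i
    · subst hai
      exact hw ⟨a, by simpa using ha.symm⟩
    · exact hai (hc.2.1 (by simpa [hai] using ha))
  simpa [Function.update_of_ne hz, Function.update_of_ne hz'] using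
    arc_succ_iff_not_arc_of_notMem_range hnocyc (hc.update hw hwi) hcard hn hci z

/-- The Hamiltonian cycle is `u g(k+1..p) v g(z+1..k) g(1..z)` if `z < k`, and
`u g(1..k-1) v g(z+1..p) g(k..z)` if `z > k`. -/
theorem hamiltonian_of_exchange [Fintype V] {g : ℕ → V} (hg : ∀ t, D.Arc (g t) (g (t + 1)))
    {p k z : ℕ} {u v : V} (hcard : Fintype.card V = p + 2)
    (hcover : ∀ a, a ≠ u → a ≠ v → ∃ t, 1 ≤ t ∧ t ≤ p ∧ a = g t)
    (hk1 : D.Arc (g k) (g 1)) (hpk : D.Arc (g p) (g k))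
    (hu1 : D.Arc u (g 1)) (huk : D.Arc u (g (k + 1)))
    (hpv : D.Arc (g p) v) (hkv : D.Arc (g (k - 1)) v)
    (hz : 1 ≤ z ∧ z + 1 < k ∧ k < p ∨ 1 < k ∧ k < z ∧ z < p)
    (hzu : D.Arc (g z) u) (hvz : D.Arc v (g (z + 1))) : D.Hamiltonian := by
  have mem {s e t : ℕ} (hs : s ≤ t) (he : t ≤ e) : g t ∈ (List.range' s (e + 1 - s)).map g :=
    List.mem_map_of_mem (List.mem_range'_1.2 ⟨hs, by omega⟩)
  rcases hz with ⟨hz1, hzk, hkp⟩ | ⟨hk, hkz, hzp⟩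
  · refine hamiltonian_of_isChain (a := u)
      (l := (List.range' (k + 1) (p + 1 - (k + 1))).map g ++ v ::
        ((List.range' (z + 1) (k + 1 - (z + 1))).map g ++ (List.range' 1 (z + 1 - 1)).map g))
      (by simp only [List.length_append, List.length_cons, List.length_map, List.length_range',
        hcard]; omega) ?_ ?_
    · intro a
      by_cases hau : a = u
      · simp [hau]
      by_cases hav : a = v
      · simp [hav]
      obtain ⟨t, ht1, htp, rfl⟩ := hcover a hau hav
      simp only [List.mem_cons, List.mem_append]
      rcases le_or_gt t z with htz | htz
      · exact .inr (.inr (.inr (.inr (mem ht1 htz))))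
      rcases le_or_gt t k with htk | htk
      · exact .inr (.inr (.inr (.inl (mem htz htk))))
      · exact .inr (.inl (mem htk htp))
    · simp only [List.cons_append, List.append_assoc]
      refine List.isChain_cons_map_range'_append hg (by omega) huk (.cons_cons hpv ?_)
      refine List.isChain_cons_map_range'_append hg (by omega) hvz ?_
      exact List.isChain_cons_map_range'_append hg hz1 hk1 (.cons_cons hzu (.singleton u))
  · refine hamiltonian_of_isChain (a := u)
      (l := (List.range' 1 (k - 1 + 1 - 1)).map g ++ v ::
        ((List.range' (z + 1) (p + 1 - (z + 1))).map g ++ (List.range' k (z + 1 - k)).map g))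
      (by simp only [List.length_append, List.length_cons, List.length_map, List.length_range',
        hcard]; omega) ?_ ?_
    · intro a
      by_cases hau : a = u
      · simp [hau]
      by_cases hav : a = v
      · simp [hav]
      obtain ⟨t, ht1, htp, rfl⟩ := hcover a hau hav
      simp only [List.mem_cons, List.mem_append]
      rcases lt_or_ge t k with htk | htk
      · exact .inr (.inl (mem ht1 (by omega)))
      rcases le_or_gt t z with htz | htz
      · exact .inr (.inr (.inr (.inr (mem htk htz))))
      · exact .inr (.inr (.inr (.inl (mem htz htp))))
    · simp only [List.cons_append, List.append_assoc]
      refine List.isChain_cons_map_range'_append hg (by omega) hu1 (.cons_cons hkv ?_)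
      refine List.isChain_cons_map_range'_append hg (by omega) hvz ?_
      exact List.isChain_cons_map_range'_append hg hkz.le hpk (.cons_cons hzu (.singleton u))

theorem adj_comm {u v : V} : D.Adj u v ↔ D.Adj v u := or_comm

theorem IsCycle.arc_of_arc_of_canReplace [Fintype V] {m : ℕ} {b : ZMod (2 * m) → V}
    (hb : D.IsCycle b) (hcard : Fintype.card V = 2 * m + 1) (hH : ¬ D.Hamiltonian) {u v : V}
    (hcover : ∀ a, a ≠ u → a ≠ v → ∃ z ≠ 0, a = b z) {k : ℕ} (hk1 : 2 ≤ k) (hk2 : k ≤ 2 * m - 2)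
    (hk : D.CanReplace b 0 (b k)) (hu0 : D.CanReplace b 0 u) (huk : D.CanReplace b k u)
    (hv0 : D.CanReplace b 0 v) (hvk : D.CanReplace b k v)
    (hv : ∀ z, D.Arc v (b (z + 1)) ↔ ¬ D.Arc (b z) v)
    (hbu : ¬ D.Arc (b 0) u) (hku : ¬ D.Adj (b k) u) {z : ZMod (2 * m)} (hzu : D.Arc (b z) u) :
    D.Arc (b z) v := by
  have : NeZero (2 * m) := ⟨by omega⟩
  have hp : ((2 * m - 1 : ℕ) : ZMod (2 * m)) = -1 := by
    rw [Nat.cast_pred (by omega), ZMod.natCast_self, zero_sub]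
  obtain ⟨t, ht, rfl⟩ : ∃ t < 2 * m, (t : ZMod (2 * m)) = z :=
    ⟨z.val, z.val_lt, ZMod.natCast_zmod_val z⟩
  rcases (by omega : t = 0 ∨ t = k - 1 ∨ t = k ∨ t = 2 * m - 1 ∨
      (1 ≤ t ∧ t + 1 < k ∧ k < 2 * m - 1 ∨ 1 < k ∧ k < t ∧ t < 2 * m - 1))
    with rfl | rfl | rfl | rfl | ht
  · exact absurd (by simpa using hzu) hbu
  · simpa [Nat.cast_pred (show 0 < k by omega)] using hvk.1
  · exact absurd (.inl hzu) hku
  · simpa [hp] using hv0.1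
  by_contra hzv
  set g : ℕ → V := fun t => b t
  refine hH (hamiltonian_of_exchange (g := g) (p := 2 * m - 1) (k := k)
    (fun t => by simpa [g] using hb.2.2 t) (by omega) (fun a hau hav => ?_)
    (by simpa [g] using hk.2)
    (by simpa [g, hp] using hk.1) (by simpa [g] using hu0.2) (by simpa [g] using huk.2)
    (by simpa [g, hp] using hv0.1) (by simpa [g, Nat.cast_pred (show 0 < k by omega)] using hvk.1)
    ht hzu (by simpa [g] using (hv t).2 hzv))
  obtain ⟨z, hz, rfl⟩ := hcover a hau hav
  exact ⟨z.val, Nat.one_le_iff_ne_zero.2 ((ZMod.val_ne_zero z).2 hz),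
    Nat.le_sub_one_of_lt z.val_lt, by simp [g]⟩

end Dgr

open Dgr in
/-- Indexing: `b i = x_i`, so `y = x_{n-1} = b 0` and `x_p = b (2m-1)`. -/
theorem statement11_general {V : Type*} [Fintype V] (m : ℕ) (D : Dgr V)
    (hcard : Fintype.card V = 2 * m + 1)
    (hnocyc : ¬ D.CycleThrough {u | D.TVertex m u})
    (b : ZMod (2 * m) → V) (hb : D.IsCycle b)
    (x : V) (hx : x ∉ Set.range b)
    (hxy : ¬ D.Adj x (b 0))
    (k : ℕ) (hk1 : 2 ≤ k) (hk2 : k ≤ 2 * m - 2)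
    (hknx : ¬ D.Adj (b (k : ZMod (2 * m))) x)
    (hkny : ¬ D.Adj (b (k : ZMod (2 * m))) (b 0)) :
    D.Arc (b ((2 * m - 1 : ℕ) : ZMod (2 * m))) (b (k : ZMod (2 * m))) ∧
    D.Arc (b (k : ZMod (2 * m))) (b 1) ∧
    {v | D.Arc x v} = {v | D.Arc (b 0) v} ∧
    {v | D.Arc v x} = {v | D.Arc v (b 0)} := by
  have : NeZero (2 * m) := ⟨by omega⟩
  have hH : ¬ D.Hamiltonian := fun h => hnocyc (h.cycleThrough _)
  have hx_iff := arc_succ_iff_not_arc_of_notMem_range hnocyc hb hcard le_rfl hx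
  have hx0 : D.CanReplace b 0 x := canReplace_of_arc_succ_iff hx_iff hxy
  have hxk : D.CanReplace b k x := canReplace_of_arc_succ_iff hx_iff (adj_comm.not.1 hknx)
  have hy_iff := arc_succ_iff_not_arc_of_replace hnocyc hb hcard le_rfl hx hx0
  have hyk : D.CanReplace b k (b 0) := canReplace_of_arc_succ_iff hy_iff (adj_comm.not.1 hkny)
  have hk_iff := arc_succ_iff_not_arc_of_replace hnocyc hb hcard le_rfl hx hxk
  have hk0 : D.CanReplace b 0 (b k) := canReplace_of_arc_succ_iff hk_iff hkny
  have hcover : ∀ a, a ≠ x → a ≠ b 0 → ∃ z ≠ 0, a = b z := fun a hax hay => by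
    obtain ⟨z, rfl⟩ := hb.mem_range_of_ne hcard hx hax
    exact ⟨z, fun hz => hay (hz ▸ rfl), rfl⟩
  have hin : ∀ z, D.Arc (b z) x ↔ D.Arc (b z) (b 0) := fun z =>
    ⟨hb.arc_of_arc_of_canReplace hcard hH hcover hk1 hk2 hk0 hx0 hxk (hb.canReplace_self 0) hyk
      hy_iff (hxy ∘ .inr) hknx,
    hb.arc_of_arc_of_canReplace hcard hH (fun a hay hax => hcover a hax hay) hk1 hk2 hk0
      (hb.canReplace_self 0) hyk hx0 hxk hx_iff (D.loopless _) hkny⟩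
  have hp : ((2 * m - 1 : ℕ) : ZMod (2 * m)) = -1 := by
    rw [Nat.cast_pred (by omega), ZMod.natCast_self, zero_sub]
  refine ⟨by simpa [hp] using hk0.1, by simpa using hk0.2, Set.ext fun a => ?_, Set.ext fun a => ?_⟩
  · by_cases hax : a = x
    · subst hax
      exact iff_of_false (D.loopless a) (hxy ∘ .inr)
    obtain ⟨z, rfl⟩ := hb.mem_range_of_ne hcard hx hax
    simpa using (hx_iff (z - 1)).trans ((hin (z - 1)).not.trans (hy_iff (z - 1)).symm)
  · by_cases hax : a = x
    · subst hax
      exact iff_of_false (D.loopless a) (hxy ∘ .inl)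
    obtain ⟨z, rfl⟩ := hb.mem_range_of_ne hcard hx hax
    exact hin z

/-- **Remark 1.** Setup as in Claim 3 (`b i = x_i`, `y = x_{n-1} = b 0`, `p = n-2 = 2m-1`).
If for some `k ∈ [2, p-1]` the vertex `x_k` is adjacent to neither `x` nor `y`, then
`x_p x_k, x_k x_1 ∈ D`, and `N⁺(x) = N⁺(y)`, `N⁻(x) = N⁻(y)`. -/
theorem statement11 {V : Type*} [Fintype V] (m : ℕ) (D : Dgr V)
    (hcard : Fintype.card V = 2 * m + 1) (hn : 5 ≤ 2 * m + 1)
    (hstrong : D.Strong)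
    (hnocyc : ¬ D.CycleThrough {u | D.TVertex m u})
    (b : ZMod (2 * m) → V) (hb : D.IsCycle b)
    (x : V) (hx : x ∉ Set.range b)
    (hxy : ¬ D.Adj x (b 0))
    (k : ℕ) (hk1 : 2 ≤ k) (hk2 : k ≤ 2 * m - 2)
    (hknx : ¬ D.Adj (b (k : ZMod (2 * m))) x)
    (hkny : ¬ D.Adj (b (k : ZMod (2 * m))) (b 0)) :
    D.Arc (b ((2 * m - 1 : ℕ) : ZMod (2 * m))) (b (k : ZMod (2 * m))) ∧
    D.Arc (b (k : ZMod (2 * m))) (b 1) ∧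
    {v | D.Arc x v} = {v | D.Arc (b 0) v} ∧
    {v | D.Arc v x} = {v | D.Arc v (b 0)} :=
  statement11_general m D hcard hnocyc b hb x hx hxy k hk1 hk2 hknx hkny
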